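/- Let G be a finite simple graph and let S₁, S₂ be two disjoint sets of vertices of G, each of size at least 2, with no edge of G joining a vertex of S₁ to a vertex of S₂, and assume i(S₁ ∪ S₂) > 0. Then C(S₁ ∪ S₂) < max(C(S₁), C(S₂)); that is, splitting a disconnected set into its two disconnected parts strictly increases the cohesion of at least one part above that of the union. -/

import Mathlib

open Finset
open scoped Classical

/-- The set of triangles of a finite simple graph `G`: 3-element vertex sets
that are pairwise adjacent. -/
noncomputable def triangles {V : Type*} [Fintype V] (G : SimpleGraph V) : Finset (Finset V) :=
  Finset.univ.filter (fun t => t.card = 3 ∧ (t : Set V).Pairwise G.Adj)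

/-- `triIn G S` is the number of triangles of `G` with all three vertices in `S`. -/
noncomputable def triIn {V : Type*} [Fintype V] (G : SimpleGraph V) (S : Finset V) : ℕ :=
  ((triangles G).filter (fun t => t ⊆ S)).card

/-- `triOut G S` is the number of triangles of `G` with exactly two vertices in `S`. -/
noncomputable def triOut {V : Type*} [Fintype V] (G : SimpleGraph V) (S : Finset V) : ℕ :=
  ((triangles G).filter (fun t => (t ∩ S).card = 2)).card

/-- The cohesion of a set of vertices `S` in `G`:
`C(S) = i(S)² / (choose(|S|,3) · (i(S) + o(S)))`, which is `0` when the
denominator vanishes (division by zero in `ℝ`). -/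
noncomputable def cohesion {V : Type*} [Fintype V] (G : SimpleGraph V) (S : Finset V) : ℝ :=
  (triIn G S : ℝ) ^ 2 / ((S.card.choose 3 : ℝ) * ((triIn G S : ℝ) + (triOut G S : ℝ)))

/-!
No triangle meets both `S₁` and `S₂`, so `i` and `o` are additive over `S₁ ∪ S₂`. Writing
`aⱼ = choose(|Sⱼ|, 3)` and `xⱼ = i(Sⱼ) + o(Sⱼ)`, the bounds `i(Sⱼ)² ≤ M aⱼ xⱼ` with
`M = max (C S₁) (C S₂)` combine, by Cauchy–Schwarz, to `(i₁ + i₂)² ≤ M (a₁ + a₂)(x₁ + x₂)`,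
and `a₁ + a₂ < choose(|S₁| + |S₂|, 3)` makes the resulting bound on `C(S₁ ∪ S₂)` strict.
-/

theorem Nat.choose_three_add_lt {m n : ℕ} (hm : 2 ≤ m) (hn : 2 ≤ n) :
    m.choose 3 + n.choose 3 < (m + n).choose 3 := by
  have hvandermonde :
      (m + n).choose 3 = m.choose 3 + m.choose 2 * n + m * n.choose 2 + n.choose 3 := by
    simp [Nat.add_choose_eq, Finset.Nat.sum_antidiagonal_succ, add_comm, add_left_comm, mul_comm]
  have hcross : 0 < m.choose 2 * n := Nat.mul_pos (Nat.choose_pos hm) (by omega)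
  omega

theorem sq_add_le_mul_add_mul_add {i₁ i₂ a₁ a₂ x₁ x₂ M : ℝ} (hM : 0 ≤ M)
    (ha₁ : 0 ≤ a₁) (ha₂ : 0 ≤ a₂) (hx₁ : 0 ≤ x₁) (hx₂ : 0 ≤ x₂)
    (h₁ : i₁ ^ 2 ≤ M * (a₁ * x₁)) (h₂ : i₂ ^ 2 ≤ M * (a₂ * x₂)) :
    (i₁ + i₂) ^ 2 ≤ M * ((a₁ + a₂) * (x₁ + x₂)) := by
  -- `(2 i₁ i₂)² ≤ 4 (M a₁ x₂)(M a₂ x₁) ≤ (M a₁ x₂ + M a₂ x₁)²`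
  have hcross_sq : (2 * (i₁ * i₂)) ^ 2 ≤ (M * (a₁ * x₂) + M * (a₂ * x₁)) ^ 2 := by
    have := mul_le_mul h₁ h₂ (sq_nonneg _) ((sq_nonneg _).trans h₁)
    nlinarith [sq_nonneg (M * (a₁ * x₂) - M * (a₂ * x₁))]
  have hcross := (abs_le_of_sq_le_sq hcross_sq (by positivity)).trans' (le_abs_self _)
  nlinarith

theorem sq_add_div_mul_add_lt {i₁ i₂ a₁ a₂ x₁ x₂ M N : ℝ} (hM : 0 ≤ M)
    (ha₁ : 0 ≤ a₁) (ha₂ : 0 ≤ a₂) (hx₁ : 0 ≤ x₁) (hx₂ : 0 ≤ x₂)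
    (h₁ : i₁ ^ 2 ≤ M * (a₁ * x₁)) (h₂ : i₂ ^ 2 ≤ M * (a₂ * x₂))
    (hN : a₁ + a₂ < N) (hi : i₁ + i₂ ≠ 0) :
    (i₁ + i₂) ^ 2 / (N * (x₁ + x₂)) < M := by
  have hbound := sq_add_le_mul_add_mul_add hM ha₁ ha₂ hx₁ hx₂ h₁ h₂
  have hpos : 0 < M * ((a₁ + a₂) * (x₁ + x₂)) := (by positivity : 0 < (i₁ + i₂) ^ 2).trans_le hbound
  have hM' : 0 < M := pos_of_mul_pos_left hpos (by positivity)
  have hx : 0 < x₁ + x₂ := pos_of_mul_pos_right (pos_of_mul_pos_right hpos hM) (by positivity)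
  have hN' : 0 < N := by linarith
  rw [div_lt_iff₀ (by positivity)]
  calc (i₁ + i₂) ^ 2 ≤ M * ((a₁ + a₂) * (x₁ + x₂)) := hbound
    _ < M * (N * (x₁ + x₂)) := by gcongr

theorem SimpleGraph.disjoint_or_disjoint_of_pairwise_adj {V : Type*} (G : SimpleGraph V)
    {S₁ S₂ t : Finset V} (hdisj : Disjoint S₁ S₂) (hsep : ∀ u ∈ S₁, ∀ v ∈ S₂, ¬ G.Adj u v)
    (ht : (t : Set V).Pairwise G.Adj) : Disjoint t S₁ ∨ Disjoint t S₂ := by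
  by_contra! h
  obtain ⟨u, hut, hu⟩ := Finset.not_disjoint_iff.1 h.1
  obtain ⟨v, hvt, hv⟩ := Finset.not_disjoint_iff.1 h.2
  exact hsep u hu v hv (ht hut hvt (Finset.disjoint_left.1 hdisj hu <| · ▸ hv))

section Triangles

variable {V : Type*} [Fintype V] (G : SimpleGraph V)

theorem mem_triangles {t : Finset V} :
    t ∈ triangles G ↔ t.card = 3 ∧ (t : Set V).Pairwise G.Adj := by
  simp [triangles]

theorem cohesion_nonneg (S : Finset V) : 0 ≤ cohesion G S := by
  unfold cohesion
  positivity

theorem three_le_card_of_triIn_pos {S : Finset V} (h : 0 < triIn G S) : 3 ≤ S.card := by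
  obtain ⟨t, ht⟩ := Finset.card_pos.1 h
  rw [mem_filter, mem_triangles] at ht
  exact ht.1.1 ▸ card_le_card ht.2

theorem sq_triIn_le_of_cohesion_le {S : Finset V} {c : ℝ} (hc : 0 ≤ c) (h : cohesion G S ≤ c) :
    (triIn G S : ℝ) ^ 2 ≤ c * ((S.card.choose 3 : ℝ) * ((triIn G S : ℝ) + (triOut G S : ℝ))) := by
  rcases Nat.eq_zero_or_pos (triIn G S) with h0 | hpos
  · rw [h0, Nat.cast_zero, zero_pow two_ne_zero]
    positivity
  · have hchoose : 0 < S.card.choose 3 := Nat.choose_pos (three_le_card_of_triIn_pos G hpos)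
    have hden : (0 : ℝ) < (S.card.choose 3 : ℝ) * ((triIn G S : ℝ) + (triOut G S : ℝ)) := by
      positivity
    exact (div_le_iff₀ hden).1 h

variable {S₁ S₂ : Finset V}

theorem triIn_union (hdisj : Disjoint S₁ S₂) (hsep : ∀ u ∈ S₁, ∀ v ∈ S₂, ¬ G.Adj u v) :
    triIn G (S₁ ∪ S₂) = triIn G S₁ + triIn G S₂ := by
  have hsplit {t} (ht : t ∈ triangles G) : Disjoint t S₁ ∨ Disjoint t S₂ :=
    G.disjoint_or_disjoint_of_pairwise_adj hdisj hsep ((mem_triangles G).1 ht).2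
  unfold triIn
  rw [← card_union_of_disjoint, ← filter_or]
  · refine congrArg card (filter_congr fun t ht => ⟨fun hsub => ?_, ?_⟩)
    · rcases hsplit ht with h | h
      exacts [Or.inr (h.left_le_of_le_sup_left hsub), Or.inl (h.left_le_of_le_sup_right hsub)]
    · rintro (h | h)
      exacts [h.trans subset_union_left, h.trans subset_union_right]
  · refine disjoint_filter.2 fun t ht h₁ h₂ => ?_
    have hne : t.Nonempty := card_pos.1 (by rw [((mem_triangles G).1 ht).1]; norm_num)
    exact hne.ne_empty (disjoint_self.1 (hdisj.mono h₁ h₂))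

theorem triOut_union (hdisj : Disjoint S₁ S₂) (hsep : ∀ u ∈ S₁, ∀ v ∈ S₂, ¬ G.Adj u v) :
    triOut G (S₁ ∪ S₂) = triOut G S₁ + triOut G S₂ := by
  have hsplit {t} (ht : t ∈ triangles G) : t ∩ S₁ = ∅ ∨ t ∩ S₂ = ∅ := by
    simpa only [disjoint_iff_inter_eq_empty] using
      G.disjoint_or_disjoint_of_pairwise_adj hdisj hsep ((mem_triangles G).1 ht).2
  unfold triOut
  rw [← card_union_of_disjoint, ← filter_or]
  · refine congrArg card (filter_congr fun t ht => ?_)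
    rw [inter_union_distrib_left,
      card_union_of_disjoint (hdisj.mono inter_subset_right inter_subset_right)]
    rcases hsplit ht with h | h <;> simp [h]
  · refine disjoint_filter.2 fun t ht h₁ h₂ => ?_
    rcases hsplit ht with h | h
    exacts [by simp [h] at h₁, by simp [h] at h₂]

end Triangles

theorem cohesion_union_lt_max {V : Type*} [Fintype V]
    (G : SimpleGraph V) (S₁ S₂ : Finset V)
    (hdisj : Disjoint S₁ S₂)
    (h₁ : 2 ≤ S₁.card) (h₂ : 2 ≤ S₂.card)
    (hsep : ∀ u ∈ S₁, ∀ v ∈ S₂, ¬ G.Adj u v)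
    (htri : 0 < triIn G (S₁ ∪ S₂)) :
    cohesion G (S₁ ∪ S₂) < max (cohesion G S₁) (cohesion G S₂) := by
  have hM : 0 ≤ max (cohesion G S₁) (cohesion G S₂) :=
    (cohesion_nonneg G S₁).trans (le_max_left _ _)
  have hN : (S₁.card.choose 3 : ℝ) + S₂.card.choose 3 < (S₁ ∪ S₂).card.choose 3 := by
    rw [card_union_of_disjoint hdisj]
    exact_mod_cast Nat.choose_three_add_lt h₁ h₂
  have hi : (triIn G S₁ : ℝ) + triIn G S₂ ≠ 0 := by
    rw [triIn_union G hdisj hsep] at htri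
    exact_mod_cast htri.ne'
  have key := sq_add_div_mul_add_lt hM (by positivity) (by positivity) (by positivity)
    (by positivity) (sq_triIn_le_of_cohesion_le G hM (le_max_left _ _))
    (sq_triIn_le_of_cohesion_le G hM (le_max_right _ _)) hN hi
  rw [cohesion, triIn_union G hdisj hsep, triOut_union G hdisj hsep]
  push_cast
  rwa [add_add_add_comm]
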